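/- Let Δ be a simplicial complex on {1,…,n} and F a face of Δ. Then the relative simplicial cohomology H^{i}(Δ, cost F; k) is isomorphic to the reduced simplicial cohomology H̃^{i−|F|}(lk F; k) of the link of F, for all i. -/

import Mathlib

namespace SR
open Classical

variable (k : Type) [Field k] {n : ℕ}

/-- A simplicial complex on `Fin n`: a downward closed family of finite vertex sets. -/
def IsComplex {n : ℕ} (Δ : Set (Finset (Fin n))) : Prop := ∀ F ∈ Δ, ∀ G ⊆ F, G ∈ Δ

/-- `Δ` is pure `(d-1)`-dimensional: every face is contained in a face of cardinality `d`. -/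
def IsPure {n : ℕ} (Δ : Set (Finset (Fin n))) (d : ℕ) : Prop :=
  (∀ F ∈ Δ, ∃ G ∈ Δ, F ⊆ G ∧ G.card = d) ∧ ∀ F ∈ Δ, F.card ≤ d

/-- The link of a face `F`. -/
def lk {n : ℕ} (Δ : Set (Finset (Fin n))) (F : Finset (Fin n)) : Set (Finset (Fin n)) :=
  {G | F ∩ G = ∅ ∧ F ∪ G ∈ Δ}

/-- The contrastar of a face `τ`: the faces of `Δ` not containing `τ`. -/
def cost {n : ℕ} (Δ : Set (Finset (Fin n))) (τ : Finset (Fin n)) : Set (Finset (Fin n)) :=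
  {γ ∈ Δ | ¬ τ ⊆ γ}

/-- Relative simplicial `i`-cochains of the pair `(Δ, Γ)` with coefficients in `k`:
functions on the `i`-dimensional faces of `Δ` not lying in `Γ` (a face of dimension `i` has
`i + 1` vertices; the empty face has dimension `-1`).  For `Γ = ∅` these are the reduced
(augmented) cochains of `Δ`. -/
abbrev Cch (Δ Γ : Set (Finset (Fin n))) (i : ℤ) : Type :=
  {F : Finset (Fin n) // F ∈ Δ ∧ F ∉ Γ ∧ (F.card : ℤ) = i + 1} → k

/-- The simplicial coboundary map from relative `i₀`-cochains to relative `(i₀+1)`-cochains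
(formulated with independent source and target degrees `i₀`, `j`; it is the zero map unless
`j = i₀ + 1`): `(δ f)(F) = Σ_{v ∈ F} (-1)^{|{w ∈ F : w < v}|} f(F \ v)`. -/
noncomputable def cob (Δ Γ : Set (Finset (Fin n))) (i₀ j : ℤ) : Cch k Δ Γ i₀ →ₗ[k] Cch k Δ Γ j where
  toFun f F := ∑ v ∈ F.1, ((-1 : k) ^ ((F.1.filter (fun w => w < v)).card)) *
      (if h : (F.1.erase v ∈ Δ ∧ F.1.erase v ∉ Γ ∧ ((F.1.erase v).card : ℤ) = i₀ + 1)
        then f ⟨F.1.erase v, h⟩ else 0)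
  map_add' f g := by
    funext F
    rw [Pi.add_apply, ← Finset.sum_add_distrib]
    refine Finset.sum_congr rfl fun v _ => ?_
    split
    · simp [mul_add]
    · ring
  map_smul' c f := by
    funext F
    rw [RingHom.id_apply, Pi.smul_apply, smul_eq_mul, Finset.mul_sum]
    refine Finset.sum_congr rfl fun v _ => ?_
    split
    · rw [Pi.smul_apply, smul_eq_mul]; ring
    · ring

/-- Relative simplicial cohomology `H^i(Δ, Γ; k)` in degree `i`:
cocycles modulo coboundaries.  For `Γ = ∅` this is reduced cohomology `H̃^i(Δ; k)`. -/
abbrev Coh (Δ Γ : Set (Finset (Fin n))) (i : ℤ) :=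
  ↥(LinearMap.ker (cob k Δ Γ i (i + 1))) ⧸
    (Submodule.comap (LinearMap.ker (cob k Δ Γ i (i + 1))).subtype
      (LinearMap.range (cob k Δ Γ (i - 1) i)))

/-!
The faces of `Δ` outside `cost Δ F` are exactly the faces `G ⊇ F`, and `G ↦ G \ F` is a
bijection from them onto the faces of `lk Δ F`, lowering the cardinality by `|F|`. Transporting
cochains along it, twisted by the sign `(-1)` to the number of pairs `w ∈ F`, `v ∈ H` with
`w < v`, gives an isomorphism of cochain groups commuting with the coboundaries: at `F ∪ H`, the
terms deleting a vertex of `F` vanish because that face lies in `cost Δ F`, and deleting `v ∈ H`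
changes the position sign by the number of vertices of `F` below `v`, which the twist absorbs.
Isomorphic cochain complexes have isomorphic cohomology.
-/

open LinearMap Submodule in
noncomputable def homologyEquivOfComm {R : Type*} [Ring R] {M₀ M₁ M₂ N₀ N₁ N₂ : Type*}
    [AddCommGroup M₀] [Module R M₀] [AddCommGroup M₁] [Module R M₁]
    [AddCommGroup M₂] [Module R M₂] [AddCommGroup N₀] [Module R N₀]
    [AddCommGroup N₁] [Module R N₁] [AddCommGroup N₂] [Module R N₂]
    {d₀ : M₀ →ₗ[R] M₁} {d₁ : M₁ →ₗ[R] M₂} {d₀' : N₀ →ₗ[R] N₁} {d₁' : N₁ →ₗ[R] N₂}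
    (e₀ : M₀ ≃ₗ[R] N₀) (e₁ : M₁ ≃ₗ[R] N₁) (e₂ : M₂ ≃ₗ[R] N₂)
    (h₀ : e₁.toLinearMap ∘ₗ d₀ = d₀' ∘ₗ e₀.toLinearMap)
    (h₁ : e₂.toLinearMap ∘ₗ d₁ = d₁' ∘ₗ e₁.toLinearMap) :
    (ker d₁ ⧸ (range d₀).comap (ker d₁).subtype) ≃ₗ[R]
      (ker d₁' ⧸ (range d₀').comap (ker d₁').subtype) :=
  have hker : (ker d₁).map e₁.toLinearMap = ker d₁' := by
    rw [← LinearEquiv.ker_comp e₂ d₁, h₁, ker_comp,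
      map_comap_eq_of_surjective e₁.surjective]
  have hrange : (range d₀).map e₁.toLinearMap = range d₀' := by
    rw [← range_comp, h₀, range_comp_of_range_eq_top _ e₀.range]
  Submodule.Quotient.equiv _ _
    ((e₁.submoduleMap (ker d₁)).trans (LinearEquiv.ofEq _ _ hker)) <| by
    ext x
    rw [mem_map_equiv, mem_comap, mem_comap, ← hrange, mem_map_equiv]
    rfl

abbrev IsRelFace (Δ Γ : Set (Finset (Fin n))) (i : ℤ) (G : Finset (Fin n)) : Prop :=
  G ∈ Δ ∧ G ∉ Γ ∧ (G.card : ℤ) = i + 1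

noncomputable def shuffleSign (F H : Finset (Fin n)) : k :=
  (-1 : k) ^ ∑ v ∈ H, (F.filter (fun w => w < v)).card

lemma neg_one_pow_mul_self {R : Type*} [Monoid R] [HasDistribNeg R] (m : ℕ) :
    (-1 : R) ^ m * (-1 : R) ^ m = 1 :=
  pow_mul_pow_eq_one m (by simp)

lemma shuffleSign_mul_self (F H : Finset (Fin n)) : shuffleSign k F H * shuffleSign k F H = 1 :=
  neg_one_pow_mul_self _

lemma shuffleSign_eq_mul_erase (F H : Finset (Fin n)) {v : Fin n} (hv : v ∈ H) :
    shuffleSign k F H =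
      (-1 : k) ^ (F.filter (fun w => w < v)).card * shuffleSign k F (H.erase v) := by
  rw [shuffleSign, shuffleSign, ← pow_add, ← Finset.add_sum_erase _ _ hv]

noncomputable def extendByZero (Δ Γ : Set (Finset (Fin n))) (i : ℤ) :
    Cch k Δ Γ i →ₗ[k] (Finset (Fin n) → k) where
  toFun f G := if h : IsRelFace Δ Γ i G then f ⟨G, h⟩ else 0
  map_add' f g := funext fun G => by dsimp only [Pi.add_apply]; split_ifs <;> simp
  map_smul' c f := funext fun G => by dsimp only [Pi.smul_apply]; split_ifs <;> simp

section extendByZero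

variable {Δ Γ : Set (Finset (Fin n))} {i : ℤ} (f : Cch k Δ Γ i) {G : Finset (Fin n)}

lemma extendByZero_of_isRelFace (h : IsRelFace Δ Γ i G) :
    extendByZero k Δ Γ i f G = f ⟨G, h⟩ :=
  dif_pos h

lemma extendByZero_of_not_isRelFace (h : ¬ IsRelFace Δ Γ i G) : extendByZero k Δ Γ i f G = 0 :=
  dif_neg h

lemma cob_apply (j : ℤ) (G : {G : Finset (Fin n) // IsRelFace Δ Γ j G}) :
    cob k Δ Γ i j f G = ∑ v ∈ G.1, (-1 : k) ^ (G.1.filter (fun w => w < v)).card *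
      extendByZero k Δ Γ i f (G.1.erase v) :=
  rfl

end extendByZero

section link

variable {Δ : Set (Finset (Fin n))} {F G H : Finset (Fin n)} {j j' : ℤ}

lemma isRelFace_cost_union (h : j = j' + F.card) (hH : IsRelFace (lk Δ F) ∅ j' H) :
    IsRelFace Δ (cost Δ F) j (F ∪ H) := by
  obtain ⟨⟨hdisj, hun⟩, -, hcard⟩ := hH
  refine ⟨hun, fun hc => hc.2 Finset.subset_union_left, ?_⟩
  rw [Finset.card_union_of_disjoint (Finset.disjoint_iff_inter_eq_empty.2 hdisj)]
  push_cast
  omega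

lemma isRelFace_link_of_union (h : j = j' + F.card) (hd : Disjoint F H)
    (hFH : IsRelFace Δ (cost Δ F) j (F ∪ H)) : IsRelFace (lk Δ F) ∅ j' H := by
  obtain ⟨hun, -, hcard⟩ := hFH
  refine ⟨⟨Finset.disjoint_iff_inter_eq_empty.1 hd, hun⟩, Set.notMem_empty _, ?_⟩
  rw [Finset.card_union_of_disjoint hd] at hcard
  push_cast at hcard
  omega

lemma subset_of_notMem_cost (hG : G ∈ Δ) (h : G ∉ cost Δ F) : F ⊆ G :=
  not_not.1 fun hs => h ⟨hG, hs⟩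

lemma isRelFace_link_sdiff (h : j = j' + F.card) (hG : IsRelFace Δ (cost Δ F) j G) :
    IsRelFace (lk Δ F) ∅ j' (G \ F) := by
  have hFG := subset_of_notMem_cost hG.1 hG.2.1
  refine isRelFace_link_of_union h Finset.disjoint_sdiff ?_
  rwa [Finset.union_sdiff_of_subset hFG]

end link

section linkCochain

variable (Δ : Set (Finset (Fin n))) (F : Finset (Fin n))

noncomputable def toLinkCochain (j j' : ℤ) :
    Cch k Δ (cost Δ F) j →ₗ[k] Cch k (lk Δ F) ∅ j' :=
  LinearMap.pi fun H => shuffleSign k F H.1 •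
    (LinearMap.proj (F ∪ H.1) ∘ₗ extendByZero k Δ (cost Δ F) j)

noncomputable def ofLinkCochain (j j' : ℤ) :
    Cch k (lk Δ F) ∅ j' →ₗ[k] Cch k Δ (cost Δ F) j :=
  LinearMap.pi fun G => shuffleSign k F (G.1 \ F) •
    (LinearMap.proj (G.1 \ F) ∘ₗ extendByZero k (lk Δ F) ∅ j')

lemma toLinkCochain_apply (j j' : ℤ) (f : Cch k Δ (cost Δ F) j)
    (H : {H : Finset (Fin n) // IsRelFace (lk Δ F) ∅ j' H}) :
    toLinkCochain k Δ F j j' f H =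
      shuffleSign k F H.1 * extendByZero k Δ (cost Δ F) j f (F ∪ H.1) :=
  rfl

lemma ofLinkCochain_apply (j j' : ℤ) (g : Cch k (lk Δ F) ∅ j')
    (G : {G : Finset (Fin n) // IsRelFace Δ (cost Δ F) j G}) :
    ofLinkCochain k Δ F j j' g G =
      shuffleSign k F (G.1 \ F) * extendByZero k (lk Δ F) ∅ j' g (G.1 \ F) :=
  rfl

noncomputable def costLinkCochainEquiv {j j' : ℤ} (h : j = j' + F.card) :
    Cch k Δ (cost Δ F) j ≃ₗ[k] Cch k (lk Δ F) ∅ j' := by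
  refine .ofLinearMap (toLinkCochain k Δ F j j') (ofLinkCochain k Δ F j j') ?_ ?_
  · refine LinearMap.ext fun g => funext fun H => ?_
    have hd : Disjoint F H.1 := Finset.disjoint_iff_inter_eq_empty.2 H.2.1.1
    rw [LinearMap.comp_apply, toLinkCochain_apply,
      extendByZero_of_isRelFace k _ (isRelFace_cost_union h H.2), ofLinkCochain_apply,
      Finset.union_sdiff_cancel_left hd, extendByZero_of_isRelFace k g H.2, ← mul_assoc,
      shuffleSign_mul_self, one_mul, LinearMap.id_apply]
  · refine LinearMap.ext fun f => funext fun G => ?_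
    have hFG : F ∪ G.1 \ F = G.1 :=
      Finset.union_sdiff_of_subset (subset_of_notMem_cost G.2.1 G.2.2.1)
    rw [LinearMap.comp_apply, ofLinkCochain_apply,
      extendByZero_of_isRelFace k _ (isRelFace_link_sdiff h G.2), toLinkCochain_apply, hFG,
      extendByZero_of_isRelFace k f G.2, ← mul_assoc, shuffleSign_mul_self, one_mul,
      LinearMap.id_apply]

lemma extendByZero_toLinkCochain {j j' : ℤ} (h : j = j' + F.card) (f : Cch k Δ (cost Δ F) j)
    {H : Finset (Fin n)} (hd : Disjoint F H) :
    extendByZero k (lk Δ F) ∅ j' (toLinkCochain k Δ F j j' f) H =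
      shuffleSign k F H * extendByZero k Δ (cost Δ F) j f (F ∪ H) := by
  by_cases hH : IsRelFace (lk Δ F) ∅ j' H
  · rw [extendByZero_of_isRelFace k _ hH, toLinkCochain_apply]
  · rw [extendByZero_of_not_isRelFace k _ hH, extendByZero_of_not_isRelFace k f
      (fun hFH => hH (isRelFace_link_of_union h hd hFH)), mul_zero]

lemma extendByZero_cost_erase_of_mem {j : ℤ} (f : Cch k Δ (cost Δ F) j) (G : Finset (Fin n))
    {v : Fin n} (hv : v ∈ F) : extendByZero k Δ (cost Δ F) j f (G.erase v) = 0 :=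
  extendByZero_of_not_isRelFace k f fun ⟨hG, hnc, _⟩ =>
    hnc ⟨hG, fun hFG => Finset.notMem_erase v G (hFG hv)⟩

lemma toLinkCochain_comp_cob {j j₁ j' j₁' : ℤ} (h : j = j' + F.card)
    (h₁ : j₁ = j₁' + F.card) :
    toLinkCochain k Δ F j₁ j₁' ∘ₗ cob k Δ (cost Δ F) j j₁ =
      cob k (lk Δ F) ∅ j' j₁' ∘ₗ toLinkCochain k Δ F j j' := by
  refine LinearMap.ext fun f => funext fun H => ?_
  have hd : Disjoint F H.1 := Finset.disjoint_iff_inter_eq_empty.2 H.2.1.1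
  rw [LinearMap.comp_apply, LinearMap.comp_apply, toLinkCochain_apply,
    extendByZero_of_isRelFace k _ (isRelFace_cost_union h₁ H.2), cob_apply, cob_apply,
    Finset.sum_union hd,
    Finset.sum_eq_zero fun v hv => by rw [extendByZero_cost_erase_of_mem k Δ F f _ hv, mul_zero],
    zero_add, Finset.mul_sum]
  refine Finset.sum_congr rfl fun v hv => ?_
  have hvF : v ∉ F := Finset.disjoint_right.mp hd hv
  have hfilter : ((F ∪ H.1).filter (fun w => w < v)).card
      = (F.filter (fun w => w < v)).card + (H.1.filter (fun w => w < v)).card := by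
    rw [Finset.filter_union, Finset.card_union_of_disjoint
      (hd.mono (Finset.filter_subset _ _) (Finset.filter_subset _ _))]
  rw [extendByZero_toLinkCochain k Δ F h f (hd.mono_right (Finset.erase_subset v H.1)),
    Finset.erase_union_distrib, Finset.erase_eq_of_notMem hvF, hfilter, pow_add,
    shuffleSign_eq_mul_erase k F H.1 hv]
  linear_combination (shuffleSign k F (H.1.erase v) *
    (-1 : k) ^ (H.1.filter (fun w => w < v)).card *
    extendByZero k Δ (cost Δ F) j f (F ∪ H.1.erase v)) *
    neg_one_pow_mul_self (R := k) (F.filter (fun w => w < v)).card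

end linkCochain

theorem stmt9 (Δ : Set (Finset (Fin n))) (F : Finset (Fin n))
    (i : ℤ) :
    Nonempty ((Coh k Δ (cost Δ F) i) ≃ₗ[k] (Coh k (lk Δ F) ∅ (i - F.card))) :=
  ⟨homologyEquivOfComm (costLinkCochainEquiv k Δ F (j' := i - F.card - 1) (by omega))
    (costLinkCochainEquiv k Δ F (j' := i - F.card) (by omega))
    (costLinkCochainEquiv k Δ F (j' := i - F.card + 1) (by omega))
    (toLinkCochain_comp_cob k Δ F (by omega) (by omega))
    (toLinkCochain_comp_cob k Δ F (by omega) (by omega))⟩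

end SR
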